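/- arXiv:2302.05836 — 4 statements merged into one kernel-verified Lean document; each statement's English description precedes it below -/
import Mathlib

section
/- In the continual-learning linear model with p ≥ n + 2 and T = 4 tasks, suppose the ground-truth vectors come from two categories C₁ and C₂ with two tasks each, such that ‖w_i*‖² is the same for all i, w_i* = w_j* whenever tasks i and j belong to the same category, and ‖w_i* − w_j*‖² = d > 0 whenever they belong to different categories. Then among all assignments of the four tasks to the sequence positions, the expected forgetting E[F₄] given by the closed-form of Theorem 1 is minimized by the perfectly alternating orders (C₁,C₂,C₁,C₂) and (C₂,C₁,C₂,C₁). -/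
/-- Squared Euclidean norm of a vector in `ℝ^m`. -/
noncomputable def sqNorm {m : ℕ} (v : Fin m → ℝ) : ℝ := ∑ i, (v i) ^ 2

/-- The overparameterization ratio `r = 1 − n/p`. -/
noncomputable def rRatio (p n : ℕ) : ℝ := 1 - (n : ℝ) / p

/-- The coefficient `c_{i,j} = (1 − r)(r^{T−i} − r^{j−i} + r^{T−j})`. -/
noncomputable def cCoef (p n T i j : ℕ) : ℝ :=
  (1 - rRatio p n) * (rRatio p n ^ (T - i) - rRatio p n ^ (j - i) + rRatio p n ^ (T - j))

/-- The closed form of the expected forgetting `E[F_T]` from Theorem 1 of the paper, as a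
function of the sequence of ground truths `w_1*, …, w_T*` (given by `wstar 1, …, wstar T`):
`E[F_T] = (1/(T−1)) Σ_{i=1}^{T−1} [(r^T − r^i)‖w_i*‖² + Σ_{j=i+1}^{T} c_{i,j}‖w_i* − w_j*‖²
  + (pσ²/(p−n−1))(r^i − r^T)]`. -/
noncomputable def EFclosed (p n T : ℕ) (σ : ℝ) (wstar : ℕ → Fin p → ℝ) : ℝ :=
  (1 / ((T : ℝ) - 1)) * ∑ i ∈ Finset.Icc 1 (T - 1),
    ((rRatio p n ^ T - rRatio p n ^ i) * sqNorm (wstar i)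
      + ∑ j ∈ Finset.Icc (i + 1) T, cCoef p n T i j * sqNorm (wstar i - wstar j)
      + ((p : ℝ) * σ ^ 2 / ((p : ℝ) - n - 1)) * (rRatio p n ^ i - rRatio p n ^ T))

/-- Fully expanded form of `EFclosed` for `T = 4`. -/
lemma EF4_expand (p n : ℕ) (σ : ℝ) (w : ℕ → Fin p → ℝ) :
    EFclosed p n 4 σ w = (1 / 3) * (
      ((rRatio p n ^ 4 - rRatio p n ^ 1) * sqNorm (w 1)
        + (cCoef p n 4 1 2 * sqNorm (w 1 - w 2) + cCoef p n 4 1 3 * sqNorm (w 1 - w 3)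
            + cCoef p n 4 1 4 * sqNorm (w 1 - w 4))
        + ((p : ℝ) * σ ^ 2 / ((p : ℝ) - n - 1)) * (rRatio p n ^ 1 - rRatio p n ^ 4))
      + ((rRatio p n ^ 4 - rRatio p n ^ 2) * sqNorm (w 2)
        + (cCoef p n 4 2 3 * sqNorm (w 2 - w 3) + cCoef p n 4 2 4 * sqNorm (w 2 - w 4))
        + ((p : ℝ) * σ ^ 2 / ((p : ℝ) - n - 1)) * (rRatio p n ^ 2 - rRatio p n ^ 4))
      + ((rRatio p n ^ 4 - rRatio p n ^ 3) * sqNorm (w 3)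
        + cCoef p n 4 3 4 * sqNorm (w 3 - w 4)
        + ((p : ℝ) * σ ^ 2 / ((p : ℝ) - n - 1)) * (rRatio p n ^ 3 - rRatio p n ^ 4))) := by
  unfold EFclosed
  rw [show (4 : ℕ) - 1 = 3 from rfl,
    show (Finset.Icc 1 3 : Finset ℕ) = {1,2,3} from by decide]
  rw [Finset.sum_insert (by decide), Finset.sum_insert (by decide), Finset.sum_singleton]
  rw [show (Finset.Icc (1+1) 4 : Finset ℕ) = {2,3,4} from by decide,
    show (Finset.Icc (2+1) 4 : Finset ℕ) = {3,4} from by decide,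
    show (Finset.Icc (3+1) 4 : Finset ℕ) = {4} from by decide]
  rw [Finset.sum_insert (by decide), Finset.sum_insert (by decide),
    Finset.sum_singleton, Finset.sum_insert (by decide),
    Finset.sum_singleton, Finset.sum_singleton]
  norm_num
  ring

set_option maxHeartbeats 2000000 in
/-- **Proposition 2, T = 4.** Two categories of tasks with two tasks each,
equal ground-truth norms, and cross-category squared distance `d > 0`. Among all
assignments `c` of the four positions to the two categories (two positions per category),
the closed-form expected forgetting `E[F₄]` of Theorem 1 is minimized by the two perfectly
alternating orders `(C₁,C₂,C₁,C₂)` and `(C₂,C₁,C₂,C₁)`. -/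
theorem alternating_order_optimal_four_tasks
    (p n : ℕ) (hn : 1 ≤ n) (hp : n + 2 ≤ p) (σ : ℝ) (hσ : 0 ≤ σ) (d : ℝ) (hd : 0 < d)
    (g : Fin 2 → Fin p → ℝ)
    (hnorm : sqNorm (g 0) = sqNorm (g 1))
    (hdist : sqNorm (g 0 - g 1) = d)
    (a : ℕ → Fin 2)
    (ha : (∀ i, a i = if i % 2 = 1 then 0 else 1) ∨ (∀ i, a i = if i % 2 = 1 then 1 else 0))
    (c : ℕ → Fin 2)
    (hc : ((Finset.Icc 1 4).filter fun i => c i = 0).card = 2) :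
    EFclosed p n 4 σ (fun i => g (a i)) ≤ EFclosed p n 4 σ (fun i => g (c i)) := by
  have hr0 : 0 ≤ rRatio p n := by
    have h1 : (n : ℝ) / p ≤ 1 := by
      apply div_le_one_of_le₀
      · exact_mod_cast Nat.le_of_lt (by omega)
      · positivity
    simp only [rRatio]; linarith
  have hr1 : rRatio p n ≤ 1 := by
    have : 0 ≤ (n : ℝ) / p := by positivity
    simp only [rRatio]; linarith
  set r := rRatio p n with hrdef
  have hzero : sqNorm (0 : Fin p → ℝ) = 0 := by simp [sqNorm]
  have hsym : sqNorm (g 1 - g 0) = d := by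
    rw [← hdist]
    unfold sqNorm
    apply Finset.sum_congr rfl
    intro i _
    simp only [Pi.sub_apply]
    ring
  have key : ∀ x y : Fin 2, sqNorm (g x - g y) = if x = y then 0 else d := by
    intro x y
    fin_cases x <;> fin_cases y <;> simp [hzero, hdist, hsym]
  have keyn : sqNorm (g 1) = sqNorm (g 0) := hnorm.symm
  have hv : ∀ x : Fin 2, x = 0 ∨ x = 1 := by decide
  have hn1 : sqNorm (g (a 1)) = sqNorm (g 0) := by
    rcases hv (a 1) with h | h <;> rw [h]; exact keyn
  have hn2 : sqNorm (g (a 2)) = sqNorm (g 0) := by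
    rcases hv (a 2) with h | h <;> rw [h]; exact keyn
  have hn3 : sqNorm (g (a 3)) = sqNorm (g 0) := by
    rcases hv (a 3) with h | h <;> rw [h]; exact keyn
  have ha1 : a 1 ≠ a 2 := by rcases ha with h | h <;> simp [h 1, h 2]
  have ha2 : a 2 ≠ a 3 := by rcases ha with h | h <;> simp [h 2, h 3]
  have ha3 : a 3 ≠ a 4 := by rcases ha with h | h <;> simp [h 3, h 4]
  have ha4 : a 1 = a 3 := by rcases ha with h | h <;> simp [h 1, h 3]
  have ha5 : a 2 = a 4 := by rcases ha with h | h <;> simp [h 2, h 4]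
  have ha6 : a 1 ≠ a 4 := by rcases ha with h | h <;> simp [h 1, h 4]
  rw [EF4_expand, EF4_expand]
  simp only [key, if_neg ha1, if_neg ha2, if_neg ha3, if_pos ha4, if_pos ha5, if_neg ha6,
    hn1, hn2, hn3]
  rcases hv (c 1) with h1 | h1 <;> rcases hv (c 2) with h2 | h2 <;>
    rcases hv (c 3) with h3 | h3 <;> rcases hv (c 4) with h4 | h4 <;>
    norm_num [show (Finset.Icc 1 4 : Finset ℕ) = {1,2,3,4} from by decide,
      Finset.filter_insert, Finset.filter_singleton, h1, h2, h3, h4] at hc <;>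
    simp only [h1, h2, h3, h4, key, keyn, hzero, cCoef, ← hrdef] <;>
    norm_num <;>
    nlinarith [mul_nonneg (mul_nonneg hd.le hr0) (mul_nonneg (sub_nonneg.mpr hr1) (sub_nonneg.mpr hr1)),
      mul_nonneg (mul_nonneg (mul_nonneg hd.le hr0) hr0) (mul_nonneg (sub_nonneg.mpr hr1) (sub_nonneg.mpr hr1)),
      mul_nonneg (mul_nonneg (mul_nonneg hd.le hr0) (sub_nonneg.mpr hr1)) (mul_nonneg (sub_nonneg.mpr hr1) (sub_nonneg.mpr hr1)),
      mul_nonneg hd.le (mul_nonneg hr0 (sub_nonneg.mpr hr1))]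
end

section
/- In the continual-learning linear model with p ≥ n + 2 and T = 6 tasks, suppose the ground-truth vectors come from three categories C₁, C₂, C₃ with two tasks each, such that ‖w_i*‖² is the same for all i, ‖w_i* − w_j*‖² = 0 whenever tasks i and j belong to the same category, and ‖w_i* − w_j*‖² = 1 whenever they belong to different categories. Then among all assignments of the six tasks to the sequence positions, the expected forgetting E[F₆] given by the closed-form of Theorem 1 is minimized by the perfectly alternating orders (C_i, C_j, C_k, C_i, C_j, C_k) where {i, j, k} = {1, 2, 3}. -/
/-- The perfectly alternating pattern of three categories over positions `1, 2, 3, …`: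
positions `1,2,3,4,5,6,…` are mapped to categories `0,1,2,0,1,2,…`. -/
def pat3 (pos : ℕ) : Fin 3 := ⟨(pos + 2) % 3, Nat.mod_lt _ (by norm_num)⟩

set_option maxHeartbeats 1000000 in
set_option synthInstance.maxHeartbeats 400000 in
set_option synthInstance.maxSize 2048 in
private lemma six_tuple_cases (u1 u2 u3 u4 u5 u6 : Fin 3)
    (h : ∀ k : Fin 3, (((if u1 = k then 1 else 0) + ((if u2 = k then 1 else 0) + ((if u3 = k then 1 else 0) + ((if u4 = k then 1 else 0) + ((if u5 = k then 1 else 0) + (if u6 = k then 1 else 0)))))) : ℕ) = 2) :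
    (u1 = u2 ∧ ¬ u1 = u3 ∧ ¬ u1 = u4 ∧ ¬ u1 = u5 ∧ ¬ u1 = u6 ∧ ¬ u2 = u3 ∧ ¬ u2 = u4 ∧ ¬ u2 = u5 ∧ ¬ u2 = u6 ∧ u3 = u4 ∧ ¬ u3 = u5 ∧ ¬ u3 = u6 ∧ ¬ u4 = u5 ∧ ¬ u4 = u6 ∧ u5 = u6) ∨
    (u1 = u2 ∧ ¬ u1 = u3 ∧ ¬ u1 = u4 ∧ ¬ u1 = u5 ∧ ¬ u1 = u6 ∧ ¬ u2 = u3 ∧ ¬ u2 = u4 ∧ ¬ u2 = u5 ∧ ¬ u2 = u6 ∧ ¬ u3 = u4 ∧ u3 = u5 ∧ ¬ u3 = u6 ∧ ¬ u4 = u5 ∧ u4 = u6 ∧ ¬ u5 = u6) ∨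
    (u1 = u2 ∧ ¬ u1 = u3 ∧ ¬ u1 = u4 ∧ ¬ u1 = u5 ∧ ¬ u1 = u6 ∧ ¬ u2 = u3 ∧ ¬ u2 = u4 ∧ ¬ u2 = u5 ∧ ¬ u2 = u6 ∧ ¬ u3 = u4 ∧ ¬ u3 = u5 ∧ u3 = u6 ∧ u4 = u5 ∧ ¬ u4 = u6 ∧ ¬ u5 = u6) ∨
    (¬ u1 = u2 ∧ u1 = u3 ∧ ¬ u1 = u4 ∧ ¬ u1 = u5 ∧ ¬ u1 = u6 ∧ ¬ u2 = u3 ∧ u2 = u4 ∧ ¬ u2 = u5 ∧ ¬ u2 = u6 ∧ ¬ u3 = u4 ∧ ¬ u3 = u5 ∧ ¬ u3 = u6 ∧ ¬ u4 = u5 ∧ ¬ u4 = u6 ∧ u5 = u6) ∨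
    (¬ u1 = u2 ∧ u1 = u3 ∧ ¬ u1 = u4 ∧ ¬ u1 = u5 ∧ ¬ u1 = u6 ∧ ¬ u2 = u3 ∧ ¬ u2 = u4 ∧ u2 = u5 ∧ ¬ u2 = u6 ∧ ¬ u3 = u4 ∧ ¬ u3 = u5 ∧ ¬ u3 = u6 ∧ ¬ u4 = u5 ∧ u4 = u6 ∧ ¬ u5 = u6) ∨
    (¬ u1 = u2 ∧ u1 = u3 ∧ ¬ u1 = u4 ∧ ¬ u1 = u5 ∧ ¬ u1 = u6 ∧ ¬ u2 = u3 ∧ ¬ u2 = u4 ∧ ¬ u2 = u5 ∧ u2 = u6 ∧ ¬ u3 = u4 ∧ ¬ u3 = u5 ∧ ¬ u3 = u6 ∧ u4 = u5 ∧ ¬ u4 = u6 ∧ ¬ u5 = u6) ∨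
    (¬ u1 = u2 ∧ ¬ u1 = u3 ∧ u1 = u4 ∧ ¬ u1 = u5 ∧ ¬ u1 = u6 ∧ u2 = u3 ∧ ¬ u2 = u4 ∧ ¬ u2 = u5 ∧ ¬ u2 = u6 ∧ ¬ u3 = u4 ∧ ¬ u3 = u5 ∧ ¬ u3 = u6 ∧ ¬ u4 = u5 ∧ ¬ u4 = u6 ∧ u5 = u6) ∨
    (¬ u1 = u2 ∧ ¬ u1 = u3 ∧ u1 = u4 ∧ ¬ u1 = u5 ∧ ¬ u1 = u6 ∧ ¬ u2 = u3 ∧ ¬ u2 = u4 ∧ u2 = u5 ∧ ¬ u2 = u6 ∧ ¬ u3 = u4 ∧ ¬ u3 = u5 ∧ u3 = u6 ∧ ¬ u4 = u5 ∧ ¬ u4 = u6 ∧ ¬ u5 = u6) ∨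
    (¬ u1 = u2 ∧ ¬ u1 = u3 ∧ u1 = u4 ∧ ¬ u1 = u5 ∧ ¬ u1 = u6 ∧ ¬ u2 = u3 ∧ ¬ u2 = u4 ∧ ¬ u2 = u5 ∧ u2 = u6 ∧ ¬ u3 = u4 ∧ u3 = u5 ∧ ¬ u3 = u6 ∧ ¬ u4 = u5 ∧ ¬ u4 = u6 ∧ ¬ u5 = u6) ∨
    (¬ u1 = u2 ∧ ¬ u1 = u3 ∧ ¬ u1 = u4 ∧ u1 = u5 ∧ ¬ u1 = u6 ∧ u2 = u3 ∧ ¬ u2 = u4 ∧ ¬ u2 = u5 ∧ ¬ u2 = u6 ∧ ¬ u3 = u4 ∧ ¬ u3 = u5 ∧ ¬ u3 = u6 ∧ ¬ u4 = u5 ∧ u4 = u6 ∧ ¬ u5 = u6) ∨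
    (¬ u1 = u2 ∧ ¬ u1 = u3 ∧ ¬ u1 = u4 ∧ u1 = u5 ∧ ¬ u1 = u6 ∧ ¬ u2 = u3 ∧ u2 = u4 ∧ ¬ u2 = u5 ∧ ¬ u2 = u6 ∧ ¬ u3 = u4 ∧ ¬ u3 = u5 ∧ u3 = u6 ∧ ¬ u4 = u5 ∧ ¬ u4 = u6 ∧ ¬ u5 = u6) ∨
    (¬ u1 = u2 ∧ ¬ u1 = u3 ∧ ¬ u1 = u4 ∧ u1 = u5 ∧ ¬ u1 = u6 ∧ ¬ u2 = u3 ∧ ¬ u2 = u4 ∧ ¬ u2 = u5 ∧ u2 = u6 ∧ u3 = u4 ∧ ¬ u3 = u5 ∧ ¬ u3 = u6 ∧ ¬ u4 = u5 ∧ ¬ u4 = u6 ∧ ¬ u5 = u6) ∨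
    (¬ u1 = u2 ∧ ¬ u1 = u3 ∧ ¬ u1 = u4 ∧ ¬ u1 = u5 ∧ u1 = u6 ∧ u2 = u3 ∧ ¬ u2 = u4 ∧ ¬ u2 = u5 ∧ ¬ u2 = u6 ∧ ¬ u3 = u4 ∧ ¬ u3 = u5 ∧ ¬ u3 = u6 ∧ u4 = u5 ∧ ¬ u4 = u6 ∧ ¬ u5 = u6) ∨
    (¬ u1 = u2 ∧ ¬ u1 = u3 ∧ ¬ u1 = u4 ∧ ¬ u1 = u5 ∧ u1 = u6 ∧ ¬ u2 = u3 ∧ u2 = u4 ∧ ¬ u2 = u5 ∧ ¬ u2 = u6 ∧ ¬ u3 = u4 ∧ u3 = u5 ∧ ¬ u3 = u6 ∧ ¬ u4 = u5 ∧ ¬ u4 = u6 ∧ ¬ u5 = u6) ∨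
    (¬ u1 = u2 ∧ ¬ u1 = u3 ∧ ¬ u1 = u4 ∧ ¬ u1 = u5 ∧ u1 = u6 ∧ ¬ u2 = u3 ∧ ¬ u2 = u4 ∧ u2 = u5 ∧ ¬ u2 = u6 ∧ u3 = u4 ∧ ¬ u3 = u5 ∧ ¬ u3 = u6 ∧ ¬ u4 = u5 ∧ ¬ u4 = u6 ∧ ¬ u5 = u6) := by
  revert h; revert u1 u2 u3 u4 u5 u6; decide


set_option maxHeartbeats 2000000 in
/-- **Proposition 3.** Three categories of tasks with two tasks each,
equal ground-truth norms, squared distance `0` within a category and `1` across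
categories. Among all assignments `c` of the six positions to the three categories (two
positions per category), the closed-form expected forgetting `E[F₆]` of Theorem 1 is
minimized by the perfectly alternating orders `(C_i,C_j,C_k,C_i,C_j,C_k)` with
`{i,j,k} = {1,2,3}`. -/
theorem alternating_order_optimal_six_tasks_three_categories
    (p n : ℕ) (hn : 1 ≤ n) (hp : n + 2 ≤ p) (σ : ℝ) (hσ : 0 ≤ σ)
    (g : Fin 3 → Fin p → ℝ)
    (hnorm : ∀ k k' : Fin 3, sqNorm (g k) = sqNorm (g k'))
    (hdist : ∀ k k' : Fin 3, k ≠ k' → sqNorm (g k - g k') = 1)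
    (a : ℕ → Fin 3)
    (ha : ∃ e : Fin 3 ≃ Fin 3, ∀ pos, a pos = e (pat3 pos))
    (c : ℕ → Fin 3)
    (hc : ∀ k : Fin 3, ((Finset.Icc 1 6).filter fun i => c i = k).card = 2) :
    EFclosed p n 6 σ (fun i => g (a i)) ≤ EFclosed p n 6 σ (fun i => g (c i)) := by
  obtain ⟨e, hae⟩ := ha
  have hppos : (0:ℝ) < (p:ℝ) := by exact_mod_cast (by omega : 0 < p)
  have hr0 : (0:ℝ) ≤ rRatio p n := by
    simp only [rRatio, sub_nonneg]
    rw [div_le_one hppos]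
    exact_mod_cast (by omega : n ≤ p)
  have h1r : (0:ℝ) ≤ 1 - rRatio p n := by
    simp only [rRatio]
    have hd : (0:ℝ) ≤ (n:ℝ) / (p:ℝ) := by positivity
    linarith
  have hsq : (0:ℝ) ≤ (1 - rRatio p n)^2 := sq_nonneg _
  have hcube : (0:ℝ) ≤ (1 - rRatio p n)^3 := pow_nonneg h1r 3
  have h1p : (0:ℝ) ≤ 1 + rRatio p n := by linarith
  have hq : (0:ℝ) ≤ 1 + 2*rRatio p n - rRatio p n^2 := by nlinarith [mul_nonneg hr0 h1r]
  have h2 : (0:ℝ) ≤ 2 - rRatio p n^2 := by nlinarith [mul_nonneg hr0 h1r]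
  have P1 : (0:ℝ) ≤ rRatio p n * (1 - rRatio p n)^2 * (1 + rRatio p n) := mul_nonneg (mul_nonneg hr0 hsq) h1p
  have P2 : (0:ℝ) ≤ rRatio p n * (1 - rRatio p n)^2 * (1 + 3*rRatio p n) := mul_nonneg (mul_nonneg hr0 hsq) (by linarith)
  have P3 : (0:ℝ) ≤ rRatio p n^2 * (1 - rRatio p n)^2 := mul_nonneg (sq_nonneg _) hsq
  have P4 : (0:ℝ) ≤ rRatio p n * (1 - rRatio p n)^2 * (1 + 2*rRatio p n - rRatio p n^2) := mul_nonneg (mul_nonneg hr0 hsq) hq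
  have P5 : (0:ℝ) ≤ rRatio p n^2 * (1 - rRatio p n)^3 := mul_nonneg (sq_nonneg _) hcube
  have P6 : (0:ℝ) ≤ rRatio p n * (1 - rRatio p n)^3 * (2*rRatio p n + 1) := mul_nonneg (mul_nonneg hr0 hcube) (by linarith)
  have P7 : (0:ℝ) ≤ rRatio p n * (1 - rRatio p n)^2 * (1 + rRatio p n) * (2 - rRatio p n^2) := mul_nonneg P1 h2
  have P8 : (0:ℝ) ≤ rRatio p n^2 * (1 - rRatio p n)^3 * (rRatio p n + 2) := mul_nonneg P5 (by linarith)
  have P9 : (0:ℝ) ≤ rRatio p n * (1 - rRatio p n)^3 * (1 + rRatio p n)^2 := mul_nonneg (mul_nonneg hr0 hcube) (sq_nonneg _)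
  have hN : ∀ u : Fin 3, sqNorm (g u) = sqNorm (g (0 : Fin 3)) := fun u => hnorm u 0
  have hD : ∀ u v : Fin 3, sqNorm (g u - g v) = if u = v then (0:ℝ) else 1 := by
    intro u v
    by_cases h : u = v
    · subst h; simp [sqNorm]
    · rw [if_neg h]; exact hdist u v h
  have hE : ∀ b : ℕ → Fin 3, EFclosed p n 6 σ (fun i => g (b i)) =
      1/5 * ((rRatio p n ^ 6 - rRatio p n ^ 1) * sqNorm (g (0 : Fin 3)) + (rRatio p n ^ 6 - rRatio p n ^ 2) * sqNorm (g (0 : Fin 3)) + (rRatio p n ^ 6 - rRatio p n ^ 3) * sqNorm (g (0 : Fin 3)) + (rRatio p n ^ 6 - rRatio p n ^ 4) * sqNorm (g (0 : Fin 3)) + (rRatio p n ^ 6 - rRatio p n ^ 5) * sqNorm (g (0 : Fin 3)) + (p : ℝ) * σ ^ 2 / ((p : ℝ) - (n:ℝ) - 1) * (rRatio p n ^ 1 - rRatio p n ^ 6) + (p : ℝ) * σ ^ 2 / ((p : ℝ) - (n:ℝ) - 1) * (rRatio p n ^ 2 - rRatio p n ^ 6) + (p : ℝ) * σ ^ 2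 / ((p : ℝ) - (n:ℝ) - 1) * (rRatio p n ^ 3 - rRatio p n ^ 6) + (p : ℝ) * σ ^ 2 / ((p : ℝ) - (n:ℝ) - 1) * (rRatio p n ^ 4 - rRatio p n ^ 6) + (p : ℝ) * σ ^ 2 / ((p : ℝ) - (n:ℝ) - 1) * (rRatio p n ^ 5 - rRatio p n ^ 6)
          + cCoef p n 6 1 2 * (if b 1 = b 2 then (0:ℝ) else 1)
          + cCoef p n 6 1 3 * (if b 1 = b 3 then (0:ℝ) else 1)
          + cCoef p n 6 1 4 * (if b 1 = b 4 then (0:ℝ) else 1)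
          + cCoef p n 6 1 5 * (if b 1 = b 5 then (0:ℝ) else 1)
          + cCoef p n 6 1 6 * (if b 1 = b 6 then (0:ℝ) else 1)
          + cCoef p n 6 2 3 * (if b 2 = b 3 then (0:ℝ) else 1)
          + cCoef p n 6 2 4 * (if b 2 = b 4 then (0:ℝ) else 1)
          + cCoef p n 6 2 5 * (if b 2 = b 5 then (0:ℝ) else 1)
          + cCoef p n 6 2 6 * (if b 2 = b 6 then (0:ℝ) else 1)
          + cCoef p n 6 3 4 * (if b 3 = b 4 then (0:ℝ) else 1)
          + cCoef p n 6 3 5 * (if b 3 = b 5 then (0:ℝ) else 1)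
          + cCoef p n 6 3 6 * (if b 3 = b 6 then (0:ℝ) else 1)
          + cCoef p n 6 4 5 * (if b 4 = b 5 then (0:ℝ) else 1)
          + cCoef p n 6 4 6 * (if b 4 = b 6 then (0:ℝ) else 1)
          + cCoef p n 6 5 6 * (if b 5 = b 6 then (0:ℝ) else 1)) := by
    intro b
    unfold EFclosed
    rw [show Finset.Icc 1 (6-1) = ({1,2,3,4,5} : Finset ℕ) by decide]
    norm_num [Finset.sum_insert, Finset.mem_insert,
      show Finset.Icc (1+1) 6 = ({2,3,4,5,6} : Finset ℕ) by decide,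
      show Finset.Icc (2+1) 6 = ({3,4,5,6} : Finset ℕ) by decide,
      show Finset.Icc (3+1) 6 = ({4,5,6} : Finset ℕ) by decide,
      show Finset.Icc (4+1) 6 = ({5,6} : Finset ℕ) by decide,
      show Finset.Icc (5+1) 6 = ({6} : Finset ℕ) by decide,
      hN, hD]
    ring
  have hcount : ∀ k : Fin 3, ((if c 1 = k then 1 else 0) + ((if c 2 = k then 1 else 0) + ((if c 3 = k then 1 else 0) + ((if c 4 = k then 1 else 0) + ((if c 5 = k then 1 else 0) + (if c 6 = k then 1 else 0)))))) = 2 := by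
    intro k
    have h := hc k
    rw [show (Finset.Icc 1 6 : Finset ℕ) = {1,2,3,4,5,6} by decide, Finset.card_filter] at h
    rw [Finset.sum_insert (by decide), Finset.sum_insert (by decide), Finset.sum_insert (by decide),
        Finset.sum_insert (by decide), Finset.sum_insert (by decide), Finset.sum_singleton] at h
    exact h
  rw [hE a, hE c]
  simp only [hae, Equiv.apply_eq_iff_eq]
  rw [if_neg (show ¬ pat3 1 = pat3 2 by decide),
      if_neg (show ¬ pat3 1 = pat3 3 by decide),
      if_pos (show pat3 1 = pat3 4 by decide),
      if_neg (show ¬ pat3 1 = pat3 5 by decide),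
      if_neg (show ¬ pat3 1 = pat3 6 by decide),
      if_neg (show ¬ pat3 2 = pat3 3 by decide),
      if_neg (show ¬ pat3 2 = pat3 4 by decide),
      if_pos (show pat3 2 = pat3 5 by decide),
      if_neg (show ¬ pat3 2 = pat3 6 by decide),
      if_neg (show ¬ pat3 3 = pat3 4 by decide),
      if_neg (show ¬ pat3 3 = pat3 5 by decide),
      if_pos (show pat3 3 = pat3 6 by decide),
      if_neg (show ¬ pat3 4 = pat3 5 by decide),
      if_neg (show ¬ pat3 4 = pat3 6 by decide),
      if_neg (show ¬ pat3 5 = pat3 6 by decide)]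
  simp only [cCoef]
  norm_num
  rcases six_tuple_cases (c 1) (c 2) (c 3) (c 4) (c 5) (c 6) hcount with
    ⟨q1, q2, q3, q4, q5, q6, q7, q8, q9, q10, q11, q12, q13, q14, q15⟩ | ⟨q1, q2, q3, q4, q5, q6, q7, q8, q9, q10, q11, q12, q13, q14, q15⟩ | ⟨q1, q2, q3, q4, q5, q6, q7, q8, q9, q10, q11, q12, q13, q14, q15⟩ | ⟨q1, q2, q3, q4, q5, q6, q7, q8, q9, q10, q11, q12, q13, q14, q15⟩ | ⟨q1, q2, q3, q4, q5, q6, q7, q8, q9, q10, q11, q12, q13, q14, q15⟩ | ⟨q1, q2, q3, q4, q5, q6, q7, q8, q9, q10, q11, q12, q13, q14, q15⟩ | ⟨q1, q2, q3, q4, q5, q6, q7, q8, q9, q10, q11, q12, q13, q14, q15⟩ | ⟨q1, q2, q3, q4, q5, q6, q7, q8, q9, q10, q11, q12, q13, q14, q15⟩ | ⟨q1, q2, q3, q4, q5, q6, q7, q8, q9, q10, q11, q12, q13, q14, q15⟩ | ⟨q1, q2, q3, q4, q5, q6, q7, q8, q9, q10, q11, q12, q13, q14, q15⟩ | ⟨q1,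 q2, q3, q4, q5, q6, q7, q8, q9, q10, q11, q12, q13, q14, q15⟩ | ⟨q1, q2, q3, q4, q5, q6, q7, q8, q9, q10, q11, q12, q13, q14, q15⟩ | ⟨q1, q2, q3, q4, q5, q6, q7, q8, q9, q10, q11, q12, q13, q14, q15⟩ | ⟨q1, q2, q3, q4, q5, q6, q7, q8, q9, q10, q11, q12, q13, q14, q15⟩ | ⟨q1, q2, q3, q4, q5, q6, q7, q8, q9, q10, q11, q12, q13, q14, q15⟩
  · rw [if_pos q1, if_neg q2, if_neg q3, if_neg q4, if_neg q5, if_neg q6, if_neg q7, if_neg q8, if_neg q9, if_pos q10, if_neg q11, if_neg q12, if_neg q13, if_neg q14, if_pos q15]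
    nlinarith [hr0, h1r, P1]
  · rw [if_pos q1, if_neg q2, if_neg q3, if_neg q4, if_neg q5, if_neg q6, if_neg q7, if_neg q8, if_neg q9, if_neg q10, if_pos q11, if_neg q12, if_neg q13, if_pos q14, if_neg q15]
    nlinarith [hr0, h1r, P2]
  · rw [if_pos q1, if_neg q2, if_neg q3, if_neg q4, if_neg q5, if_neg q6, if_neg q7, if_neg q8, if_neg q9, if_neg q10, if_neg q11, if_pos q12, if_pos q13, if_neg q14, if_neg q15]
    nlinarith [hr0, h1r, P1]
  · rw [if_neg q1, if_pos q2, if_neg q3, if_neg q4, if_neg q5, if_neg q6, if_pos q7, if_neg q8, if_neg q9, if_neg q10, if_neg q11, if_neg q12, if_neg q13, if_neg q14, if_pos q15]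
    nlinarith [hr0, h1r, P2]
  · rw [if_neg q1, if_pos q2, if_neg q3, if_neg q4, if_neg q5, if_neg q6, if_neg q7, if_pos q8, if_neg q9, if_neg q10, if_neg q11, if_neg q12, if_neg q13, if_pos q14, if_neg q15]
    nlinarith [hr0, h1r, P3]
  · rw [if_neg q1, if_pos q2, if_neg q3, if_neg q4, if_neg q5, if_neg q6, if_neg q7, if_neg q8, if_pos q9, if_neg q10, if_neg q11, if_neg q12, if_pos q13, if_neg q14, if_neg q15]
    nlinarith [hr0, h1r, P4]
  · rw [if_neg q1, if_neg q2, if_pos q3, if_neg q4, if_neg q5, if_pos q6, if_neg q7, if_neg q8, if_neg q9, if_neg q10, if_neg q11, if_neg q12, if_neg q13, if_neg q14, if_pos q15]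
    nlinarith [hr0, h1r, P1]
  · rw [if_neg q1, if_neg q2, if_pos q3, if_neg q4, if_neg q5, if_neg q6, if_neg q7, if_pos q8, if_neg q9, if_neg q10, if_neg q11, if_pos q12, if_neg q13, if_neg q14, if_neg q15]
    nlinarith [hr0, h1r, P3]
  · rw [if_neg q1, if_neg q2, if_pos q3, if_neg q4, if_neg q5, if_neg q6, if_neg q7, if_neg q8, if_pos q9, if_neg q10, if_pos q11, if_neg q12, if_neg q13, if_neg q14, if_neg q15]
    nlinarith [hr0, h1r, P5]
  · rw [if_neg q1, if_neg q2, if_neg q3, if_pos q4, if_neg q5, if_pos q6, if_neg q7, if_neg q8, if_neg q9, if_neg q10, if_neg q11, if_neg q12, if_neg q13, if_pos q14, if_neg q15]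
    nlinarith [hr0, h1r, P4]
  · rw [if_neg q1, if_neg q2, if_neg q3, if_pos q4, if_neg q5, if_neg q6, if_pos q7, if_neg q8, if_neg q9, if_neg q10, if_neg q11, if_pos q12, if_neg q13, if_neg q14, if_neg q15]
    nlinarith [hr0, h1r, P5]
  · rw [if_neg q1, if_neg q2, if_neg q3, if_pos q4, if_neg q5, if_neg q6, if_neg q7, if_neg q8, if_pos q9, if_pos q10, if_neg q11, if_neg q12, if_neg q13, if_neg q14, if_neg q15]
    nlinarith [hr0, h1r, P6]
  · rw [if_neg q1, if_neg q2, if_neg q3, if_neg q4, if_pos q5, if_pos q6, if_neg q7, if_neg q8, if_neg q9, if_neg q10, if_neg q11, if_neg q12, if_pos q13, if_neg q14, if_neg q15]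
    nlinarith [hr0, h1r, P7]
  · rw [if_neg q1, if_neg q2, if_neg q3, if_neg q4, if_pos q5, if_neg q6, if_pos q7, if_neg q8, if_neg q9, if_neg q10, if_pos q11, if_neg q12, if_neg q13, if_neg q14, if_neg q15]
    nlinarith [hr0, h1r, P8]
  · rw [if_neg q1, if_neg q2, if_neg q3, if_neg q4, if_pos q5, if_neg q6, if_neg q7, if_pos q8, if_neg q9, if_pos q10, if_neg q11, if_neg q12, if_neg q13, if_neg q14, if_neg q15]
    nlinarith [hr0, h1r, P9]
end

section
/- Fix T ≥ 4 and r ∈ (0,1), and define the order-dependent forgetting of placing a single special task at position k ∈ {1, …, T} (with all other T−1 tasks identical, unit squared distance between the special task's ground truth and the others, and equal ground-truth norms) as F̃(k) = Σ_{i<k} c_{i,k} + Σ_{j>k} c_{k,j}, where c_{i,j} = (1−r)(r^{T−i} − r^{j−i} + r^{T−j}). Then: (1) every integer minimizer k* of F̃ over {1, …, T} satisfies 2 ≤ k* ≤ T/2; and (2) as r increases toward 1 (i.e., as n/p decreases toward 0), the minimizing position does not increase, so k* is non-decreasing as a function of n/p. -/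
/-- The coefficient `c_{i,j} = (1 − r)(r^{T−i} − r^{j−i} + r^{T−j})` as a function of the
overparameterization ratio `r`. -/
noncomputable def cCoefR (r : ℝ) (T i j : ℕ) : ℝ :=
  (1 - r) * (r ^ (T - i) - r ^ (j - i) + r ^ (T - j))

/-- The order-dependent forgetting of placing a single special task at position
`k ∈ {1, …, T}` (all other `T−1` tasks identical, unit squared distance to the special
task, equal ground-truth norms): `F̃(k) = Σ_{i<k} c_{i,k} + Σ_{j>k} c_{k,j}`. -/
noncomputable def Ftilde (r : ℝ) (T k : ℕ) : ℝ :=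
  (∑ i ∈ Finset.Ico 1 k, cCoefR r T i k) + ∑ j ∈ Finset.Ioc k T, cCoefR r T k j

/-- `k` is a minimizer of `F̃(·)` over the positions `{1, …, T}`. -/
def IsMinPos (r : ℝ) (T k : ℕ) : Prop :=
  k ∈ Finset.Icc 1 T ∧ ∀ k' ∈ Finset.Icc 1 T, Ftilde r T k ≤ Ftilde r T k'


noncomputable def aT (r : ℝ) (T : ℕ) : ℝ := (T:ℝ) - 2 - ((T:ℝ) - 3) * r

noncomputable def phiF (r : ℝ) (T k : ℕ) : ℝ := r ^ k + aT r T * r ^ (T - k)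

open Finset

lemma Ftilde_closed (r : ℝ) (hr : r ≠ 1) {T k : ℕ} (hk1 : 1 ≤ k) (hkT : k ≤ T) :
    Ftilde r T k = (1 - r ^ T - 2 * r) + phiF r T k := by
  have h1 : ∑ i ∈ Finset.Ico 1 k, cCoefR r T i k
      = ∑ j ∈ range (k - 1), (1 - r) * (r ^ (T - k) * r ^ (j + 1) - r ^ (j + 1) + r ^ (T - k)) := by
    rw [Finset.sum_Ico_eq_sum_range,
      ← Finset.sum_range_reflect (fun j => (1 - r) * (r ^ (T - k) * r ^ (j + 1) - r ^ (j + 1) + r ^ (T - k))) (k - 1)]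
    apply Finset.sum_congr rfl
    intro j hj
    simp only [Finset.mem_range] at hj
    unfold cCoefR
    have e1 : T - (1 + j) = (T - k) + (k - 1 - 1 - j + 1) := by omega
    have e2 : k - (1 + j) = k - 1 - 1 - j + 1 := by omega
    rw [e1, e2, pow_add]
  have h2 : ∑ j ∈ Finset.Ioc k T, cCoefR r T k j
      = ∑ t ∈ range (T - k), (1 - r) * (r ^ (T - k) - r ^ (t + 1) + r ^ (T - k - 1 - t)) := by
    have hset : Finset.Ioc k T = Finset.Ico (k + 1) (T + 1) := by
      ext x; simp only [Finset.mem_Ioc, Finset.mem_Ico]; omega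
    rw [hset, Finset.sum_Ico_eq_sum_range]
    have hc : T + 1 - (k + 1) = T - k := by omega
    rw [hc]
    apply Finset.sum_congr rfl
    intro t ht
    simp only [Finset.mem_range] at ht
    unfold cCoefR
    have e1 : k + 1 + t - k = t + 1 := by omega
    have e2 : T - (k + 1 + t) = T - k - 1 - t := by omega
    rw [e1, e2]
  rw [Ftilde, h1, h2]
  set G1 := ∑ j ∈ range (k - 1), r ^ j with hG1
  set G2 := ∑ t ∈ range (T - k), r ^ t with hG2
  have hs1 : ∑ j ∈ range (k - 1), (1 - r) * (r ^ (T - k) * r ^ (j + 1) - r ^ (j + 1) + r ^ (T - k))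
      = ((1 - r) * (r ^ (T - k) * r)) * G1 - ((1 - r) * r) * G1 + ((k - 1 : ℕ) : ℝ) * ((1 - r) * r ^ (T - k)) := by
    calc ∑ j ∈ range (k - 1), (1 - r) * (r ^ (T - k) * r ^ (j + 1) - r ^ (j + 1) + r ^ (T - k))
        = ∑ j ∈ range (k - 1), (((1 - r) * (r ^ (T - k) * r)) * r ^ j - ((1 - r) * r) * r ^ j + (1 - r) * r ^ (T - k)) := by
          apply Finset.sum_congr rfl; intro j _; rw [pow_succ]; ring
      _ = _ := by
          rw [Finset.sum_add_distrib, Finset.sum_sub_distrib, ← Finset.mul_sum, ← Finset.mul_sum,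
            Finset.sum_const, Finset.card_range, nsmul_eq_mul, ← hG1]
  have hs2 : ∑ t ∈ range (T - k), (1 - r) * (r ^ (T - k) - r ^ (t + 1) + r ^ (T - k - 1 - t))
      = ((T - k : ℕ) : ℝ) * ((1 - r) * r ^ (T - k)) - ((1 - r) * r) * G2 + (1 - r) * G2 := by
    calc ∑ t ∈ range (T - k), (1 - r) * (r ^ (T - k) - r ^ (t + 1) + r ^ (T - k - 1 - t))
        = ∑ t ∈ range (T - k), ((1 - r) * r ^ (T - k) - ((1 - r) * r) * r ^ t + (1 - r) * r ^ (T - k - 1 - t)) := by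
          apply Finset.sum_congr rfl; intro t _; rw [pow_succ]; ring
      _ = _ := by
          rw [Finset.sum_add_distrib, Finset.sum_sub_distrib, ← Finset.mul_sum, ← Finset.mul_sum,
            ← Finset.mul_sum, Finset.sum_const, Finset.card_range, nsmul_eq_mul,
            Finset.sum_range_reflect (fun t => r ^ t) (T - k), ← hG2]
          ring
  rw [hs1, hs2]
  have hge1 : G1 = (r ^ (k - 1) - 1) / (r - 1) := geom_sum_eq hr _
  have hge2 : G2 = (r ^ (T - k) - 1) / (r - 1) := geom_sum_eq hr _
  have hrk : r ^ k = r ^ (k - 1) * r := by rw [← pow_succ]; congr 1; omega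
  have hrT : r ^ T = r ^ (k - 1) * r ^ (T - k) * r := by
    rw [← pow_add, ← pow_succ]; congr 1; omega
  have hc1 : ((k - 1 : ℕ) : ℝ) = (k : ℝ) - 1 := by
    have := Nat.cast_sub hk1 (R := ℝ); simpa using this
  have hc2 : ((T - k : ℕ) : ℝ) = (T : ℝ) - (k : ℝ) := by
    have := Nat.cast_sub hkT (R := ℝ); simpa using this
  rw [hge1, hge2, hc1, hc2, phiF, aT, hrk, hrT]
  have hr' : r - 1 ≠ 0 := sub_ne_zero.2 hr
  field_simp
  ring

lemma aT_gt_one {r : ℝ} {T : ℕ} (hT : 4 ≤ T) (hr1 : r < 1) : 1 < aT r T := by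
  have h4 : (4:ℝ) ≤ (T:ℝ) := by exact_mod_cast hT
  unfold aT; nlinarith

lemma aT_eq {r : ℝ} {T : ℕ} : aT r T = 1 + ((T:ℝ) - 3) * (1 - r) := by unfold aT; ring

lemma bern_lt {r : ℝ} {m : ℕ} (hm : 1 ≤ m) (hr0 : 0 < r) (hr1 : r < 1) :
    (1 + (m:ℝ) * (1 - r)) * r ^ m < 1 := by
  have hm1 : (1:ℝ) ≤ (m:ℝ) := by exact_mod_cast hm
  have hb : 1 + (m:ℝ) * ((1 - r)/r) ≤ (1/r) ^ m := by
    have e : (1 : ℝ) + (1 - r)/r = 1/r := by field_simp; ring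
    calc 1 + (m:ℝ) * ((1 - r)/r) ≤ (1 + (1 - r)/r) ^ m := by
          apply one_add_mul_le_pow
          have : (0:ℝ) ≤ (1 - r)/r := div_nonneg (by linarith) hr0.le
          linarith
      _ = (1/r) ^ m := by rw [e]
  have hdiv : (1 - r) < (1 - r)/r := by
    rw [lt_div_iff₀ hr0]; nlinarith
  have h3 : 1 + (m:ℝ) * (1 - r) < (1/r) ^ m := by
    have : (m:ℝ) * (1 - r) < (m:ℝ) * ((1 - r)/r) := by
      apply mul_lt_mul_of_pos_left hdiv; linarith
    linarith
  have hinv : (1/r) ^ m * r ^ m = 1 := by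
    rw [← mul_pow]; rw [one_div_mul_cancel hr0.ne']; simp
  calc (1 + (m:ℝ) * (1 - r)) * r ^ m < (1/r) ^ m * r ^ m :=
        mul_lt_mul_of_pos_right h3 (pow_pos hr0 m)
    _ = 1 := hinv

lemma D1_pos {r : ℝ} {T : ℕ} (hT : 4 ≤ T) (hr0 : 0 < r) (hr1 : r < 1) :
    aT r T * r ^ (T - 2) < r := by
  have hc : ((T - 3 : ℕ) : ℝ) = (T:ℝ) - 3 := by
    have h3 : (3:ℕ) ≤ T := by omega
    push_cast [Nat.cast_sub h3]; ring
  have hb := bern_lt (m := T - 3) (by omega) hr0 hr1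
  rw [hc] at hb
  have hpow : r ^ (T - 2) = r ^ (T - 3) * r := by rw [← pow_succ]; congr 1; omega
  rw [aT_eq, hpow]
  calc (1 + ((T:ℝ) - 3) * (1 - r)) * (r ^ (T - 3) * r)
      = ((1 + ((T:ℝ) - 3) * (1 - r)) * r ^ (T - 3)) * r := by ring
    _ < 1 * r := mul_lt_mul_of_pos_right hb hr0
    _ = r := one_mul r

lemma phi_diff {r : ℝ} {T k : ℕ} (hk : k < T) :
    phiF r T k - phiF r T (k + 1) = (1 - r) * (r ^ k - aT r T * r ^ (T - 1 - k)) := by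
  unfold phiF
  have e1 : T - k = (T - 1 - k) + 1 := by omega
  have e2 : T - (k + 1) = T - 1 - k := by omega
  rw [e1, e2, pow_succ]; ring

lemma minPos_bounds {r : ℝ} {T k : ℕ} (hT : 4 ≤ T) (hr0 : 0 < r) (hr1 : r < 1)
    (h : IsMinPos r T k) : 2 ≤ k ∧ 2 * k ≤ T := by
  obtain ⟨hkmem, hmin⟩ := h
  simp only [Finset.mem_Icc] at hkmem
  have hne : r ≠ 1 := ne_of_lt hr1
  have h1r : (0:ℝ) < 1 - r := by linarith
  constructor
  · by_contra hlt
    push_neg at hlt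
    have hk1 : k = 1 := by omega
    subst hk1
    have h2mem : 2 ∈ Finset.Icc 1 T := by simp only [Finset.mem_Icc]; omega
    have hle := hmin 2 h2mem
    rw [Ftilde_closed r hne (le_refl 1) (by omega),
        Ftilde_closed r hne (by norm_num) (by omega)] at hle
    have hd := phi_diff (r := r) (T := T) (k := 1) (by omega)
    have hpos : (0:ℝ) < phiF r T 1 - phiF r T 2 := by
      rw [hd]
      apply mul_pos h1r
      have := D1_pos (r := r) hT hr0 hr1
      rw [pow_one]
      have eT : T - 1 - 1 = T - 2 := by omega
      rw [eT]; linarith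
    linarith
  · by_contra hgt
    push_neg at hgt
    have hk3 : 3 ≤ k := by omega
    set j := k - 1 with hj
    have hjk : j + 1 = k := by omega
    have hjmem : j ∈ Finset.Icc 1 T := by simp only [Finset.mem_Icc]; omega
    have hle := hmin j hjmem
    rw [Ftilde_closed r hne (by omega) (by omega),
        Ftilde_closed r hne (by omega) (by omega)] at hle
    have hd := phi_diff (r := r) (T := T) (k := j) (by omega)
    rw [hjk] at hd
    have eT : T - 1 - j = T - k := by omega
    rw [eT] at hd
    have hDneg : r ^ j - aT r T * r ^ (T - k) < 0 := by
      have h1 : r ^ j ≤ r ^ (T - k) := pow_le_pow_of_le_one hr0.le hr1.le (by omega)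
      have h2 : r ^ (T - k) < aT r T * r ^ (T - k) := by
        have := aT_gt_one (r := r) hT hr1
        nlinarith [pow_pos hr0 (T - k)]
      linarith
    nlinarith

lemma D_nonpos_transfer {T k : ℕ} (hT : 4 ≤ T) {r₁ r₂ : ℝ} (h0 : 0 < r₁) (h12 : r₁ ≤ r₂)
    (h2 : r₂ < 1) (hk2 : 2 ≤ k) (hkT : 2 * k ≤ T)
    (h : r₁ ^ k ≤ aT r₁ T * r₁ ^ (T - 1 - k)) :
    r₂ ^ k ≤ aT r₂ T * r₂ ^ (T - 1 - k) := by
  have h02 : 0 < r₂ := lt_of_lt_of_le h0 h12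
  rcases Nat.lt_or_ge (2 * k) T with hlt | hge
  · set m := T - 1 - 2 * k with hm
    have e : T - 1 - k = k + m := by omega
    have h1' : (1:ℝ) ≤ aT r₁ T * r₁ ^ m := by
      have hh : r₁ ^ k * 1 ≤ r₁ ^ k * (aT r₁ T * r₁ ^ m) := by
        rw [mul_one]
        calc r₁ ^ k ≤ aT r₁ T * r₁ ^ (T - 1 - k) := h
          _ = r₁ ^ k * (aT r₁ T * r₁ ^ m) := by rw [e, pow_add]; ring
      exact le_of_mul_le_mul_left hh (pow_pos h0 k)
    have key : ∀ r : ℝ, r < 1 →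
        ((1:ℝ) ≤ aT r T * r ^ m ↔ (∑ i ∈ range m, r ^ i) ≤ ((T:ℝ) - 3) * r ^ m) := by
      intro r hr1
      have hgs := geom_sum_mul r m
      have hiden : aT r T * r ^ m - 1
          = (1 - r) * (((T:ℝ) - 3) * r ^ m - ∑ i ∈ range m, r ^ i) := by
        rw [aT_eq]; linear_combination -hgs
      constructor
      · intro hle; nlinarith [hiden]
      · intro hle; nlinarith [hiden]
    have hsum1 : (∑ i ∈ range m, r₁ ^ i) ≤ ((T:ℝ) - 3) * r₁ ^ m :=
      (key r₁ (lt_of_le_of_lt h12 h2)).1 h1'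
    have hterm : ∀ i ∈ range m, r₂ ^ i * r₁ ^ m ≤ r₁ ^ i * r₂ ^ m := by
      intro i hi
      simp only [Finset.mem_range] at hi
      have e1 : r₁ ^ m = r₁ ^ i * r₁ ^ (m - i) := by rw [← pow_add]; congr 1; omega
      have e2 : r₂ ^ m = r₂ ^ i * r₂ ^ (m - i) := by rw [← pow_add]; congr 1; omega
      rw [e1, e2]
      have hle : r₁ ^ (m - i) ≤ r₂ ^ (m - i) := pow_le_pow_left₀ h0.le h12 _
      calc r₂ ^ i * (r₁ ^ i * r₁ ^ (m - i)) = (r₁ ^ i * r₂ ^ i) * r₁ ^ (m - i) := by ring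
        _ ≤ (r₁ ^ i * r₂ ^ i) * r₂ ^ (m - i) :=
            mul_le_mul_of_nonneg_left hle (by positivity)
        _ = r₁ ^ i * (r₂ ^ i * r₂ ^ (m - i)) := by ring
    have hsum2 : (∑ i ∈ range m, r₂ ^ i) * r₁ ^ m ≤ (∑ i ∈ range m, r₁ ^ i) * r₂ ^ m := by
      rw [Finset.sum_mul, Finset.sum_mul]; exact Finset.sum_le_sum hterm
    have hmul : (∑ i ∈ range m, r₂ ^ i) * r₁ ^ m ≤ (((T:ℝ) - 3) * r₂ ^ m) * r₁ ^ m := by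
      calc (∑ i ∈ range m, r₂ ^ i) * r₁ ^ m ≤ (∑ i ∈ range m, r₁ ^ i) * r₂ ^ m := hsum2
        _ ≤ (((T:ℝ) - 3) * r₁ ^ m) * r₂ ^ m :=
            mul_le_mul_of_nonneg_right hsum1 (pow_nonneg h02.le m)
        _ = (((T:ℝ) - 3) * r₂ ^ m) * r₁ ^ m := by ring
    have hsum2' : (∑ i ∈ range m, r₂ ^ i) ≤ ((T:ℝ) - 3) * r₂ ^ m :=
      le_of_mul_le_mul_right hmul (pow_pos h0 m)
    have h2' : (1:ℝ) ≤ aT r₂ T * r₂ ^ m := (key r₂ h2).2 hsum2'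
    calc r₂ ^ k = r₂ ^ k * 1 := (mul_one _).symm
      _ ≤ r₂ ^ k * (aT r₂ T * r₂ ^ m) :=
          mul_le_mul_of_nonneg_left h2' (pow_nonneg h02.le k)
      _ = aT r₂ T * r₂ ^ (T - 1 - k) := by rw [e, pow_add]; ring
  · have e : T - 1 - k = k - 1 := by omega
    have ha : 1 < aT r₂ T := aT_gt_one hT h2
    have hk : r₂ ^ k = r₂ * r₂ ^ (k - 1) := by
      rw [← pow_succ']; congr 1; omega
    rw [e, hk]
    calc r₂ * r₂ ^ (k - 1) ≤ 1 * r₂ ^ (k - 1) :=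
          mul_le_mul_of_nonneg_right h2.le (pow_nonneg h02.le _)
      _ ≤ aT r₂ T * r₂ ^ (k - 1) :=
          mul_le_mul_of_nonneg_right (by linarith) (pow_nonneg h02.le _)

/-- **Proposition 1.** Fix `T ≥ 4` and `r ∈ (0,1)`. Then:
(1) every integer minimizer `k*` of `F̃` over `{1, …, T}` satisfies `2 ≤ k* ≤ T/2`; and
(2) as `r` increases toward `1` (i.e., as `n/p` decreases toward `0`), the minimizing
position does not increase: the (least) minimizer for a larger `r` is at most the (least)
minimizer for a smaller `r`, i.e., `k*` is non-decreasing as a function of `n/p`. -/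
theorem special_task_optimal_position (T : ℕ) (hT : 4 ≤ T) :
    (∀ r : ℝ, 0 < r → r < 1 → ∀ k : ℕ, IsMinPos r T k → 2 ≤ k ∧ 2 * k ≤ T) ∧
    (∀ r₁ r₂ : ℝ, 0 < r₁ → r₁ ≤ r₂ → r₂ < 1 → ∀ k₁ k₂ : ℕ,
      (IsMinPos r₁ T k₁ ∧ ∀ k, IsMinPos r₁ T k → k₁ ≤ k) →
      (IsMinPos r₂ T k₂ ∧ ∀ k, IsMinPos r₂ T k → k₂ ≤ k) →
      k₂ ≤ k₁) := by
  constructor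
  · intro r hr0 hr1 k h
    exact minPos_bounds hT hr0 hr1 h
  · intro r₁ r₂ h0 h12 h2 k₁ k₂ ⟨hmin1, _⟩ ⟨hmin2, hleast2⟩
    have h02 : 0 < r₂ := lt_of_lt_of_le h0 h12
    have h11 : r₁ < 1 := lt_of_le_of_lt h12 h2
    have hne1 : r₁ ≠ 1 := ne_of_lt h11
    have hne2 : r₂ ≠ 1 := ne_of_lt h2
    obtain ⟨hk12, hk1T⟩ := minPos_bounds hT h0 h11 hmin1
    have hk1mem := hmin1.1
    simp only [Finset.mem_Icc] at hk1mem
    have hk1T' : k₁ + 1 ≤ T := by omega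
    -- D_{r₁}(k₁) ≤ 0
    have hD1 : r₁ ^ k₁ - aT r₁ T * r₁ ^ (T - 1 - k₁) ≤ 0 := by
      have hmem : k₁ + 1 ∈ Finset.Icc 1 T := by simp only [Finset.mem_Icc]; omega
      have hle := hmin1.2 (k₁ + 1) hmem
      rw [Ftilde_closed r₁ hne1 (by omega) (by omega),
          Ftilde_closed r₁ hne1 (by omega) (by omega)] at hle
      have hd := phi_diff (r := r₁) (T := T) (k := k₁) (by omega)
      by_contra hpos
      push_neg at hpos
      have : (0:ℝ) < (1 - r₁) * (r₁ ^ k₁ - aT r₁ T * r₁ ^ (T - 1 - k₁)) :=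
        mul_pos (by linarith) hpos
      linarith
    have hD2 : r₂ ^ k₁ - aT r₂ T * r₂ ^ (T - 1 - k₁) ≤ 0 := by
      have := D_nonpos_transfer hT h0 h12 h2 hk12 hk1T (by linarith)
      linarith
    have haT2 : (0:ℝ) ≤ aT r₂ T := le_of_lt (lt_trans one_pos (aT_gt_one hT h2))
    -- chain: phi r₂ k₁ ≤ phi r₂ j for k₁ ≤ j ≤ T
    have chain : ∀ j, k₁ ≤ j → j ≤ T → phiF r₂ T k₁ ≤ phiF r₂ T j := by
      intro j hj hjT
      induction j, hj using Nat.le_induction with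
      | base => exact le_refl _
      | succ j hkj ih =>
        have ih' := ih (by omega)
        have hd := phi_diff (r := r₂) (T := T) (k := j) (by omega)
        have hDj : r₂ ^ j - aT r₂ T * r₂ ^ (T - 1 - j) ≤ 0 := by
          have hp1 : r₂ ^ j ≤ r₂ ^ k₁ := pow_le_pow_of_le_one h02.le h2.le hkj
          have hp2 : aT r₂ T * r₂ ^ (T - 1 - k₁) ≤ aT r₂ T * r₂ ^ (T - 1 - j) := by
            apply mul_le_mul_of_nonneg_left _ haT2
            exact pow_le_pow_of_le_one h02.le h2.le (by omega)
          linarith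
        have hstep : phiF r₂ T j ≤ phiF r₂ T (j + 1) := by
          have := mul_nonpos_of_nonneg_of_nonpos (by linarith : (0:ℝ) ≤ 1 - r₂) hDj
          linarith
        linarith
    by_contra hgt
    push_neg at hgt
    have hk2mem := hmin2.1
    simp only [Finset.mem_Icc] at hk2mem
    have hphi : phiF r₂ T k₁ ≤ phiF r₂ T k₂ := chain k₂ (by omega) hk2mem.2
    have hF : Ftilde r₂ T k₁ ≤ Ftilde r₂ T k₂ := by
      rw [Ftilde_closed r₂ hne2 (by omega) (by omega),
          Ftilde_closed r₂ hne2 (by omega) (by omega)]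
      linarith
    have hmin1' : IsMinPos r₂ T k₁ := by
      refine ⟨by simp only [Finset.mem_Icc]; omega, fun k' hk' => ?_⟩
      exact le_trans hF (hmin2.2 k' hk')
    have := hleast2 k₁ hmin1'
    omega
end

section
/- In the continual-learning linear model with fixed n and fixed T ≥ 2, fixed ground truths w_1*, …, w_T* ∈ (spanned in a common ambient space) and fixed σ ≥ 0, the closed-form expected forgetting of Theorem 1 tends to 0 as the number of parameters p tends to infinity; that is, with r = r(p) = 1 − n/p and c_{i,j}(p) = (1−r)(r^{T−i} − r^{j−i} + r^{T−j}), the quantity (1/(T−1)) Σ_{i=1}^{T−1} [ (r^T − r^i)‖w_i*‖² + Σ_{j=i+1}^{T} c_{i,j}(p) ‖w_i* − w_j*‖² + (pσ²/(p−n−1))(r^i − r^T) ] converges to 0 as p → ∞. -/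
open Filter

lemma rRatio_tendsto (n : ℕ) :
    Tendsto (fun p : ℕ => rRatio p n) atTop (nhds 1) := by
  have h : Tendsto (fun p : ℕ => (n : ℝ) / p) atTop (nhds 0) :=
    tendsto_const_div_atTop_nhds_zero_nat _
  have h1 : Tendsto (fun p : ℕ => 1 - (n : ℝ) / p) atTop (nhds (1 - 0)) :=
    Tendsto.sub tendsto_const_nhds h
  simpa [rRatio] using h1

lemma rRatio_pow_tendsto (n k : ℕ) :
    Tendsto (fun p : ℕ => rRatio p n ^ k) atTop (nhds 1) := by
  simpa using (rRatio_tendsto n).pow k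

lemma cCoef_tendsto (n T i j : ℕ) :
    Tendsto (fun p : ℕ => cCoef p n T i j) atTop (nhds 0) := by
  have h1 := (tendsto_const_nhds (x := (1:ℝ)) (f := atTop (α := ℕ))).sub (rRatio_tendsto n)
  have h2 := ((rRatio_pow_tendsto n (T - i)).sub (rRatio_pow_tendsto n (j - i))).add
    (rRatio_pow_tendsto n (T - j))
  have := h1.mul h2
  simpa [cCoef] using this

lemma noise_tendsto (n : ℕ) :
    Tendsto (fun p : ℕ => (p : ℝ) / ((p : ℝ) - n - 1)) atTop (nhds 1) := by
  have h : Tendsto (fun p : ℕ => ((p : ℝ) - n - 1) / p) atTop (nhds 1) := by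
    have h1 : Tendsto (fun p : ℕ => (n : ℝ) / p) atTop (nhds 0) :=
      tendsto_const_div_atTop_nhds_zero_nat _
    have h2 : Tendsto (fun p : ℕ => (1 : ℝ) / p) atTop (nhds 0) :=
      tendsto_const_div_atTop_nhds_zero_nat _
    have h3 : Tendsto (fun p : ℕ => 1 - (n : ℝ) / p - 1 / p) atTop (nhds (1 - 0 - 0)) :=
      (tendsto_const_nhds.sub h1).sub h2
    have heq : ∀ᶠ p : ℕ in atTop, 1 - (n : ℝ) / p - 1 / p = ((p : ℝ) - n - 1) / p := by
      filter_upwards [eventually_gt_atTop 0] with p hp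
      have hp' : (p : ℝ) ≠ 0 := by positivity
      field_simp
    exact (tendsto_congr' heq).mp (by simpa using h3)
  have hinv := h.inv₀ (by norm_num)
  have heq : ∀ᶠ p : ℕ in atTop, (((p : ℝ) - n - 1) / p)⁻¹ = (p : ℝ) / ((p : ℝ) - n - 1) := by
    filter_upwards [eventually_gt_atTop 0] with p hp
    rw [inv_div]
  simpa using (tendsto_congr' heq).mp hinv

/-- With `n`, `T ≥ 2`, `σ ≥ 0` and the squared norms `W i = ‖w_i*‖²` and
squared distances `D i j = ‖w_i* − w_j*‖²` held fixed, the closed-form expected forgetting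
of Theorem 1, namely
`(1/(T−1)) Σ_{i=1}^{T−1} [(r^T − r^i)·W i + Σ_{j=i+1}^{T} c_{i,j}·D i j
  + (pσ²/(p−n−1))(r^i − r^T)]` with `r = 1 − n/p`, tends to `0` as `p → ∞`. -/
theorem expected_forgetting_tendsto_zero (n T : ℕ) (hn : 1 ≤ n) (hT : 2 ≤ T)
    (σ : ℝ) (hσ : 0 ≤ σ) (W : ℕ → ℝ) (D : ℕ → ℕ → ℝ) :
    Filter.Tendsto (fun p : ℕ =>
        (1 / ((T : ℝ) - 1)) * ∑ i ∈ Finset.Icc 1 (T - 1),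
          ((rRatio p n ^ T - rRatio p n ^ i) * W i
            + ∑ j ∈ Finset.Icc (i + 1) T, cCoef p n T i j * D i j
            + ((p : ℝ) * σ ^ 2 / ((p : ℝ) - n - 1)) * (rRatio p n ^ i - rRatio p n ^ T)))
      Filter.atTop (nhds 0) := by
  have hsum : Tendsto (fun p : ℕ =>
      ∑ i ∈ Finset.Icc 1 (T - 1),
        ((rRatio p n ^ T - rRatio p n ^ i) * W i
          + ∑ j ∈ Finset.Icc (i + 1) T, cCoef p n T i j * D i j
          + ((p : ℝ) * σ ^ 2 / ((p : ℝ) - n - 1)) * (rRatio p n ^ i - rRatio p n ^ T)))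
      Filter.atTop (nhds 0) := by
    have : (0 : ℝ) = ∑ i ∈ Finset.Icc 1 (T - 1), (0 : ℝ) := by simp
    rw [this]
    apply tendsto_finset_sum
    intro i _
    have h1 : Tendsto (fun p : ℕ => (rRatio p n ^ T - rRatio p n ^ i) * W i)
        atTop (nhds 0) := by
      have := ((rRatio_pow_tendsto n T).sub (rRatio_pow_tendsto n i)).mul_const (W i)
      simpa using this
    have h2 : Tendsto (fun p : ℕ =>
        ∑ j ∈ Finset.Icc (i + 1) T, cCoef p n T i j * D i j) atTop (nhds 0) := by
      have : (0 : ℝ) = ∑ j ∈ Finset.Icc (i + 1) T, (0 : ℝ) := by simp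
      rw [this]
      apply tendsto_finset_sum
      intro j _
      simpa using (cCoef_tendsto n T i j).mul_const (D i j)
    have h3 : Tendsto (fun p : ℕ =>
        ((p : ℝ) * σ ^ 2 / ((p : ℝ) - n - 1)) * (rRatio p n ^ i - rRatio p n ^ T))
        atTop (nhds 0) := by
      have hnum : Tendsto (fun p : ℕ => (p : ℝ) * σ ^ 2 / ((p : ℝ) - n - 1))
          atTop (nhds (σ ^ 2)) := by
        have := (noise_tendsto n).mul_const (σ ^ 2)
        have heq : ∀ p : ℕ, (p : ℝ) / ((p : ℝ) - n - 1) * σ ^ 2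
            = (p : ℝ) * σ ^ 2 / ((p : ℝ) - n - 1) := by
          intro p; ring
        simpa [heq] using this
      have hdiff := (rRatio_pow_tendsto n i).sub (rRatio_pow_tendsto n T)
      have := hnum.mul (by simpa using hdiff)
      simpa using this
    have := (h1.add h2).add h3
    simpa using this
  have := hsum.const_mul (1 / ((T : ℝ) - 1))
  simpa using this
end
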